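/- arXiv:2106.12725 — 2 statements merged into one kernel-verified Lean document; each statement's English description precedes it below -/
import Mathlib

section
/- Let j ∈ R⁻, s = L-head(j) and H = L-root(j). Define δ(j) = |{j′ ∈ [1..n] : LCE(j,j′) ≥ 3τ−1 and T[j′..n] ⪯ T[j..n]}|, δᵃ(j) = |{j′ ∈ R⁻_{s,H} : L-exp(j′) ≤ L-exp(j)}|, and δˢ(j) = |{j′ ∈ R⁻_{s,H} : L-exp(j′) = L-exp(j) and T[j′..n] ≻ T[j..n]}|. Then δ(j) = δᵃ(j) − δˢ(j). -/
open scoped Classical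

namespace CSA

/-- Character of a 1-indexed string at position `i` (junk value 0 out of range). -/
def idx (S : List ℕ) (i : ℕ) : ℕ := S.getD (i - 1) 0

/-- Substring `S[i..j)` in the 1-indexed, half-open convention. -/
def sub (S : List ℕ) (i j : ℕ) : List ℕ := (S.drop (i - 1)).take (j - i)

/-- Suffix `S[i..|S|]` (1-indexed). -/
def suf (S : List ℕ) (i : ℕ) : List ℕ := S.drop (i - 1)

/-- Length of the longest common prefix of two strings. -/
def lcp (A B : List ℕ) : ℕ := ((A.zip B).takeWhile fun p => p.1 == p.2).length

/-- `LCE T j₁ j₂` is the length of the longest common prefix of `T[j₁..n]` and `T[j₂..n]`. -/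
def LCE (T : List ℕ) (j₁ j₂ : ℕ) : ℕ := lcp (suf T j₁) (suf T j₂)

/-- `p` is a period of `S`. -/
def IsPeriod (S : List ℕ) (p : ℕ) : Prop :=
  1 ≤ p ∧ p ≤ S.length ∧ ∀ i, i + p < S.length → S.getD i 0 = S.getD (i + p) 0

/-- The shortest period of `S`. -/
noncomputable def per (S : List ℕ) : ℕ := sInf {p | IsPeriod S p}

/-- `R = {i ∈ [1..n−3τ+2] : per(T[i..i+3τ−1)) ≤ τ/3}`. -/
noncomputable def R (T : List ℕ) (τ : ℕ) : Set ℕ :=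
  {i | 1 ≤ i ∧ i + 3 * τ ≤ T.length + 2 ∧ 3 * per (sub T i (i + 3 * τ - 1)) ≤ τ}

/-- `rend(j) = min{j′ ≥ j : j′ ∉ R} + 3τ − 2`. -/
noncomputable def rend (T : List ℕ) (τ j : ℕ) : ℕ :=
  sInf {j' | j ≤ j' ∧ j' ∉ R T τ} + 3 * τ - 2

/-- `L-root(j)`: lexicographically smallest among `{T[j+t..j+t+p) : 0 ≤ t < p}`
where `p = per(T[j..j+3τ−1))`. -/
noncomputable def Lroot (T : List ℕ) (τ j : ℕ) : List ℕ :=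
  WithTop.untopD [] ((Finset.range (per (sub T j (j + 3 * τ - 1)))).image fun t =>
      sub T (j + t) (j + t + per (sub T j (j + 3 * τ - 1)))).min

/-- `L-head(j)`: the (unique) `s ∈ [0..p)` with `T[j+s..j+s+p) = L-root(j)`. -/
noncomputable def Lhead (T : List ℕ) (τ j : ℕ) : ℕ :=
  sInf {s | s < per (sub T j (j + 3 * τ - 1)) ∧
    sub T (j + s) (j + s + per (sub T j (j + 3 * τ - 1))) = Lroot T τ j}

noncomputable def Lexp (T : List ℕ) (τ j : ℕ) : ℕ :=
  (rend T τ j - j - Lhead T τ j) / per (sub T j (j + 3 * τ - 1))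

noncomputable def Ltail (T : List ℕ) (τ j : ℕ) : ℕ :=
  (rend T τ j - j - Lhead T τ j) % per (sub T j (j + 3 * τ - 1))

noncomputable def rendfull (T : List ℕ) (τ j : ℕ) : ℕ := rend T τ j - Ltail T τ j

/-- `type(j) = +1` if `rend(j) ≤ n` and `T[rend(j)] > T[rend(j)−p]`, and `−1` otherwise. -/
noncomputable def typ (T : List ℕ) (τ j : ℕ) : ℤ :=
  if rend T τ j ≤ T.length ∧
      idx T (rend T τ j - per (sub T j (j + 3 * τ - 1))) < idx T (rend T τ j)
    then 1 else -1

noncomputable def Rminus (T : List ℕ) (τ : ℕ) : Set ℕ := {j ∈ R T τ | typ T τ j = -1}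

noncomputable def RH (T : List ℕ) (τ : ℕ) (H : List ℕ) : Set ℕ :=
  {j ∈ R T τ | Lroot T τ j = H}

noncomputable def RsH (T : List ℕ) (τ s : ℕ) (H : List ℕ) : Set ℕ :=
  {j ∈ R T τ | Lroot T τ j = H ∧ Lhead T τ j = s}

noncomputable def RminusH (T : List ℕ) (τ : ℕ) (H : List ℕ) : Set ℕ :=
  Rminus T τ ∩ RH T τ H

noncomputable def RminusSH (T : List ℕ) (τ s : ℕ) (H : List ℕ) : Set ℕ :=
  Rminus T τ ∩ RsH T τ s H

noncomputable def Rprime (T : List ℕ) (τ : ℕ) : Set ℕ := {j ∈ R T τ | j - 1 ∉ R T τ}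

/-- `Occ(P,S)`: the set of (1-indexed) starting positions of occurrences of `P` in `S`. -/
def OccSet (P S : List ℕ) : Set ℕ :=
  {j | 1 ≤ j ∧ j + P.length ≤ S.length + 1 ∧ sub S j (j + P.length) = P}

noncomputable def RangeBeg (P T : List ℕ) : ℕ :=
  Set.ncard {i | 1 ≤ i ∧ i ≤ T.length ∧ suf T i < P}

noncomputable def RangeEnd (P T : List ℕ) : ℕ := RangeBeg P T + (OccSet P T).ncard

/-- `ISA[j]`: the lexicographic rank of the suffix `T[j..n]` among all suffixes of `T`. -/
noncomputable def ISA (T : List ℕ) (j : ℕ) : ℕ :=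
  Set.ncard {j' | 1 ≤ j' ∧ j' ≤ T.length ∧ suf T j' ≤ suf T j}

/-- `succ_S(i) = min{j ∈ S ∪ {n−2τ+2} : j ≥ i}`. -/
noncomputable def succS (T : List ℕ) (τ : ℕ) (Sync : Set ℕ) (i : ℕ) : ℕ :=
  sInf {j | i ≤ j ∧ (j ∈ Sync ∨ j = T.length + 2 - 2 * τ)}

/-- The set `D` of distinguishing prefixes. -/
noncomputable def Dset (T : List ℕ) (τ : ℕ) (Sync : Set ℕ) : Set (List ℕ) :=
  {X | ∃ i, 1 ≤ i ∧ i + 3 * τ ≤ T.length + 2 ∧ i ∉ R T τ ∧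
    X = sub T i (succS T τ Sync i + 2 * τ)}

/-- `T^∞[i] = T[1 + ((i−1) mod n)]` for `i : ℤ`. -/
def tinf (T : List ℕ) (i : ℤ) : ℕ := idx T (((i - 1).emod (T.length : ℤ)).toNat + 1)

/-- `W[i]`: the reverse of `T^∞[s^lex_i − τ .. s^lex_i + 2τ)`. -/
def Wstr (T : List ℕ) (τ : ℕ) (slex : ℕ → ℕ) (i : ℕ) : List ℕ :=
  ((List.range (3 * τ)).map fun k => tinf T ((slex i : ℤ) - (τ : ℤ) + (k : ℤ))).reverse

/- Pattern versions of the `L`-decomposition functions. -/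

noncomputable def perP (τ : ℕ) (P : List ℕ) : ℕ := per (P.take (3 * τ - 1))

/-- A pattern is periodic if `|P| ≥ 3τ−1` and `per(P[1..3τ−1]) ≤ τ/3`. -/
noncomputable def Periodic (τ : ℕ) (P : List ℕ) : Prop :=
  3 * τ - 1 ≤ P.length ∧ 3 * perP τ P ≤ τ

noncomputable def pend (τ : ℕ) (P : List ℕ) : ℕ :=
  1 + perP τ P + lcp P (P.drop (perP τ P))

noncomputable def LrootP (τ : ℕ) (P : List ℕ) : List ℕ :=
  WithTop.untopD [] ((Finset.range (perP τ P)).image fun t => (P.drop t).take (perP τ P)).min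

noncomputable def LheadP (τ : ℕ) (P : List ℕ) : ℕ :=
  sInf {s | s < perP τ P ∧ (P.drop s).take (perP τ P) = LrootP τ P}

noncomputable def LexpP (τ : ℕ) (P : List ℕ) : ℕ :=
  (pend τ P - 1 - LheadP τ P) / perP τ P

noncomputable def LtailP (τ : ℕ) (P : List ℕ) : ℕ :=
  (pend τ P - 1 - LheadP τ P) % perP τ P

noncomputable def pendfullP (τ : ℕ) (P : List ℕ) : ℕ := pend τ P - LtailP τ P

noncomputable def typP (τ : ℕ) (P : List ℕ) : ℤ :=
  if pend τ P ≤ P.length ∧ idx P (pend τ P - perP τ P) < idx P (pend τ P)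
    then 1 else -1

/-- `pow(H)`: the prefix of length `|H|·⌈τ/|H|⌉` of `H^∞`. -/
def powS (τ : ℕ) (H : List ℕ) : List ℕ :=
  (List.replicate ((τ + H.length - 1) / H.length) H).flatten

/-!
Along a run of `R`, consecutive windows overlap in `3τ − 2` characters, more than the sum of
their periods, so by Fine–Wilf all windows of the run have the same period and `T[j..rend(j))`
is `|H|`-periodic. Hence every `k ∈ R_{s,H}` reads the same periodic text up to `rend(k)`, and
the first `3τ − 1` characters of `T[k..n]` decide membership in `R_{s,H}`: `LCE(j,k) ≥ 3τ − 1`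
iff `k ∈ R_{s,H}`. Two such suffixes agree up to the end of the shorter run, where the type
decides the comparison: a run of type −1 ends with a character smaller than the period predicts
(or with the end of `T`), a run of type +1 with a larger one. So for `j` of type −1,
`T[k..n] ⪯ T[j..n]` holds exactly when `k` has type −1 and either `L-exp(k) < L-exp(j)`, which
forces a shorter run, or `L-exp(k) = L-exp(j)` and `T[k..n] ⪯ T[j..n]`. Counting these `k`
gives `δ = δᵃ − δˢ`.
-/

def HasPeriodOn {α : Type*} (f : ℕ → α) (p a b : ℕ) : Prop :=
  ∀ x, a ≤ x → x + p < b → f x = f (x + p)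

namespace HasPeriodOn

variable {α : Type*} {f g : ℕ → α} {p q d a b : ℕ}

theorem mono (h : HasPeriodOn f p a b) {a' b' : ℕ} (ha : a ≤ a') (hb : b' ≤ b) :
    HasPeriodOn f p a' b' :=
  fun x hx hxb => h x (ha.trans hx) (by omega)

theorem eq_add_mul (h : HasPeriodOn f p a b) {x : ℕ} (hx : a ≤ x) :
    ∀ m, x + m * p < b → f x = f (x + m * p)
  | 0, _ => by simp
  | m + 1, hm => by
    rw [Nat.succ_mul, ← add_assoc] at hm ⊢
    rw [h.eq_add_mul hx m (by omega), h _ (by omega) hm]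

theorem eq_of_modEq (h : HasPeriodOn f p a b) {x y : ℕ} (hx : a ≤ x) (hy : a ≤ y)
    (hxb : x < b) (hyb : y < b) (hxy : x ≡ y [MOD p]) : f x = f y := by
  wlog hle : x ≤ y generalizing x y
  · exact (this hy hx hyb hxb hxy.symm (by omega)).symm
  obtain ⟨m, hm⟩ := (Nat.modEq_iff_dvd' hle).mp hxy
  have hy' : y = x + m * p := by rw [mul_comm, ← hm, Nat.add_sub_cancel' hle]
  subst hy'
  exact h.eq_add_mul hx m hyb

theorem iff_hasPeriod_map_range {L : ℕ} :
    HasPeriodOn f p a (a + L) ↔ ((List.range L).map fun i => f (a + i)).HasPeriod p := by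
  rw [List.hasPeriod_iff_getElem?]
  simp only [List.length_map, List.length_range, List.getElem?_map]
  constructor
  · intro h i hi
    rw [List.getElem?_range (by omega), List.getElem?_range (by omega), Option.map_some,
      Option.map_some, ← add_assoc, h (a + i) (by omega) (by omega)]
  · intro h x hx hxL
    have := h (x - a) (by omega)
    rw [List.getElem?_range (by omega), List.getElem?_range (by omega), Option.map_some,
      Option.map_some, Option.some_inj, ← add_assoc, Nat.add_sub_cancel' hx] at this
    exact this

theorem gcd {L : ℕ} (hp : HasPeriodOn f p a (a + L)) (hq : HasPeriodOn f q a (a + L))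
    (hL : p + q ≤ L) : HasPeriodOn f (p.gcd q) a (a + L) :=
  iff_hasPeriod_map_range.mpr <|
    (iff_hasPeriod_map_range.mp hp).gcd (iff_hasPeriod_map_range.mp hq)
      (by simp only [List.length_map, List.length_range]; omega)

theorem snoc (h : HasPeriodOn f p a b) (heq : f (b - p) = f b) :
    HasPeriodOn f p a (b + 1) := by
  intro x hx hxb
  rcases Nat.lt_or_ge (x + p) b with hlt | hge
  · exact h x hx hlt
  · obtain rfl : x = b - p := by omega
    rwa [Nat.sub_add_cancel (by omega)]

theorem extend_left (hp : HasPeriodOn f p a b) (hd : HasPeriodOn f d (a + 1) b) (hp0 : 0 < p)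
    (hdp : d ∣ p) (hpb : a + p < b) : HasPeriodOn f d a b := by
  intro x hx hxb
  rcases Nat.eq_zero_or_pos d with rfl | hd0
  · rfl
  rcases Nat.eq_or_lt_of_le hx with hxa | hx
  · subst hxa
    rw [hp a le_rfl hpb]
    exact hd.eq_of_modEq (by omega) (by omega) hpb hxb
      (Nat.ModEq.add_left _ ((Nat.modEq_zero_iff_dvd.mpr hdp).trans
        (Nat.modEq_zero_iff_dvd.mpr dvd_rfl).symm))
  · exact hd x hx hxb

theorem extend_right (hq : HasPeriodOn f q a (b + 1)) (hd : HasPeriodOn f d a b) (hq0 : 0 < q)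
    (hdq : d ∣ q) (hqb : a + q ≤ b) : HasPeriodOn f d a (b + 1) := by
  rcases Nat.eq_zero_or_pos d with rfl | hd0
  · exact fun _ _ _ => rfl
  have hdq' : d ≤ q := Nat.le_of_dvd hq0 hdq
  refine hd.snoc ?_
  have hqb' : f (b - q) = f b := by
    simpa [Nat.sub_add_cancel (by omega : q ≤ b)] using hq (b - q) (by omega) (by omega)
  rw [← hqb']
  refine hd.eq_of_modEq (by omega) (by omega) (by omega) (by omega) ?_
  refine Nat.ModEq.add_right_cancel
    ((Nat.modEq_zero_iff_dvd.mpr dvd_rfl).trans (Nat.modEq_zero_iff_dvd.mpr hdq).symm) ?_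
  rw [Nat.sub_add_cancel (by omega : d ≤ b), Nat.sub_add_cancel (by omega : q ≤ b)]

theorem eq_of_agree (hf : HasPeriodOn f p a b) (hg : HasPeriodOn g p c d) {s : ℕ} (hs : s < p)
    (hagree : ∀ t < p, f (a + s + t) = g (c + s + t)) (hsb : a + s + p ≤ b) (hsd : c + s + p ≤ d)
    {i : ℕ} (hib : a + i < b) (hid : c + i < d) : f (a + i) = g (c + i) := by
  set r := (i + p - s) % p
  have hr : r < p := Nat.mod_lt _ (by omega)
  have hmod : ∀ e, e + s + r ≡ e + i [MOD p] := fun e =>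
    calc e + s + r ≡ e + s + (i + p - s) [MOD p] := Nat.ModEq.add_left _ (Nat.mod_modEq _ _)
      _ = e + i + p := by omega
      _ ≡ e + i [MOD p] := Nat.add_modEq_right
  rw [← hf.eq_of_modEq (by omega) (by omega) (by omega) hib (hmod a), hagree r hr,
    hg.eq_of_modEq (by omega) (by omega) (by omega) hid (hmod c)]

end HasPeriodOn

theorem isPeriod_iff_hasPeriod {S : List ℕ} {p : ℕ} :
    IsPeriod S p ↔ 1 ≤ p ∧ p ≤ S.length ∧ S.HasPeriod p := by
  rw [IsPeriod, List.hasPeriod_iff_getElem?]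
  refine and_congr_right fun _ => and_congr_right fun _ => forall_congr' fun i => ?_
  constructor
  · intro h hi
    have := h (by omega)
    rwa [List.getD_eq_getElem _ _ (by omega), List.getD_eq_getElem _ _ (by omega),
      ← Option.some_inj, ← List.getElem?_eq_getElem, ← List.getElem?_eq_getElem] at this
  · intro h hi
    have := h (by omega)
    rwa [List.getElem?_eq_getElem (by omega), List.getElem?_eq_getElem (by omega),
      Option.some_inj, ← List.getD_eq_getElem _ 0, ← List.getD_eq_getElem _ 0] at this

theorem isPeriod_per {S : List ℕ} (hS : S ≠ []) : IsPeriod S (per S) :=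
  Nat.sInf_mem (s := {p | IsPeriod S p})
    ⟨S.length, List.length_pos_of_ne_nil hS, le_rfl, fun _ _ => by omega⟩

theorem per_le_of_isPeriod {S : List ℕ} {p : ℕ} (h : IsPeriod S p) : per S ≤ p :=
  Nat.sInf_le h

theorem sub_eq_map_range {T : List ℕ} {k L : ℕ} (hk : 1 ≤ k) (hkL : k + L ≤ T.length + 1) :
    sub T k (k + L) = (List.range L).map fun i => idx T (k + i) := by
  apply List.ext_getElem
  · simp only [sub, add_tsub_cancel_left, List.length_take, List.length_drop, List.length_map,
      List.length_range]
    omega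
  · intro i h₁ h₂
    simp only [sub, idx, List.getElem_take, List.getElem_drop, List.getElem_map,
      List.getElem_range]
    rw [List.getD_eq_getElem _ _ (by simp only [List.length_map, List.length_range] at h₂; omega)]
    congr 1
    omega

theorem length_suf {T : List ℕ} {k : ℕ} (hk : 1 ≤ k) : (suf T k).length = T.length + 1 - k := by
  simp only [suf, List.length_drop]
  omega

theorem getElem_suf {T : List ℕ} {k i : ℕ} (hk : 1 ≤ k) (hi : i < (suf T k).length) :
    (suf T k)[i] = idx T (k + i) := by
  simp only [suf, idx, List.getElem_drop]
  rw [List.getD_eq_getElem _ _ (by simp only [suf, List.length_drop] at hi; omega)]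
  congr 1
  omega

theorem suf_lt_suf_of_agree {T : List ℕ} {k₁ k₂ i : ℕ} (h₁ : 1 ≤ k₁) (h₂ : 1 ≤ k₂)
    (hagree : ∀ t < i, idx T (k₁ + t) = idx T (k₂ + t)) (hk₂ : k₂ + i ≤ T.length)
    (hlt : k₁ + i = T.length + 1 ∨ (k₁ + i ≤ T.length ∧ idx T (k₁ + i) < idx T (k₂ + i))) :
    suf T k₁ < suf T k₂ := by
  have hl₁ := length_suf (T := T) h₁
  have hl₂ := length_suf (T := T) h₂
  rw [List.lt_iff_exists]
  rcases hlt with hend | ⟨hk₁, hlt⟩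
  · refine Or.inl ⟨List.ext_getElem (by simp only [List.length_take]; omega)
      fun t ht₁ ht₂ => ?_, by omega⟩
    rw [List.getElem_take, getElem_suf h₁, getElem_suf h₂, hagree t (by omega)]
  · refine Or.inr ⟨i, by omega, by omega, fun t ht => ?_, ?_⟩
    · rw [getElem_suf h₁, getElem_suf h₂, hagree t ht]
    · rwa [getElem_suf h₁, getElem_suf h₂]

theorem le_lcp_iff {A B : List ℕ} {L : ℕ} :
    L ≤ lcp A B ↔ L ≤ A.length ∧ L ≤ B.length ∧ A.take L = B.take L := by
  induction A generalizing B L with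
  | nil => cases L <;> simp [lcp]
  | cons a A ih =>
    cases B with
    | nil => cases L <;> simp [lcp]
    | cons b B =>
      cases L with
      | zero => simp
      | succ L =>
        by_cases hab : a = b
        · subst hab
          have : lcp (a :: A) (a :: B) = lcp A B + 1 := by simp [lcp]
          simp [this, ih]
        · simp [lcp, hab]

def window (T : List ℕ) (τ k : ℕ) : List ℕ := sub T k (k + 3 * τ - 1)

section Window

variable {T : List ℕ} {τ k k' : ℕ}

theorem window_eq_take_suf : window T τ k = (suf T k).take (3 * τ - 1) := by
  simp only [window, sub, suf]
  congr 1
  omega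

theorem window_eq_map_range (hτ : 1 ≤ τ) (hk : 1 ≤ k) (hkn : k + 3 * τ ≤ T.length + 2) :
    window T τ k = (List.range (3 * τ - 1)).map fun i => idx T (k + i) := by
  rw [window, show k + 3 * τ - 1 = k + (3 * τ - 1) by omega]
  exact sub_eq_map_range hk (by omega)

theorem isPeriod_window_iff (hτ : 1 ≤ τ) (hk : 1 ≤ k) (hkn : k + 3 * τ ≤ T.length + 2) {q : ℕ} :
    IsPeriod (window T τ k) q ↔
      1 ≤ q ∧ q ≤ 3 * τ - 1 ∧ HasPeriodOn (idx T) q k (k + (3 * τ - 1)) := by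
  rw [isPeriod_iff_hasPeriod, HasPeriodOn.iff_hasPeriod_map_range,
    window_eq_map_range hτ hk hkn, List.length_map, List.length_range]

theorem window_eq_window_iff (hτ : 1 ≤ τ) (hk : 1 ≤ k) (hkn : k + 3 * τ ≤ T.length + 2)
    (hk' : 1 ≤ k') (hk'n : k' + 3 * τ ≤ T.length + 2) :
    window T τ k = window T τ k' ↔ ∀ i < 3 * τ - 1, idx T (k + i) = idx T (k' + i) := by
  simp [window_eq_map_range hτ hk hkn, window_eq_map_range hτ hk' hk'n, List.map_inj_left]

end Window

section Run

variable {T : List ℕ} {τ j k : ℕ}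

theorem per_window_spec (hk : k ∈ R T τ) (hτ : 1 ≤ τ) :
    0 < per (window T τ k) ∧ HasPeriodOn (idx T) (per (window T τ k)) k (k + (3 * τ - 1)) := by
  have hne : window T τ k ≠ [] := by
    rw [window_eq_map_range hτ hk.1 hk.2.1, Ne, List.map_eq_nil_iff, List.range_eq_nil]
    omega
  obtain ⟨h1, -, h⟩ := (isPeriod_window_iff hτ hk.1 hk.2.1).mp (isPeriod_per hne)
  exact ⟨h1, h⟩

theorem per_window_succ (hk : k ∈ R T τ) (hk₁ : k + 1 ∈ R T τ) (hτ : 1 ≤ τ) :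
    per (window T τ (k + 1)) = per (window T τ k) := by
  obtain ⟨hp0, hp⟩ := per_window_spec hk hτ
  obtain ⟨hq0, hq⟩ := per_window_spec hk₁ hτ
  have hp3 : 3 * per (window T τ k) ≤ τ := hk.2.2
  have hq3 : 3 * per (window T τ (k + 1)) ≤ τ := hk₁.2.2
  set p := per (window T τ k)
  set q := per (window T τ (k + 1))
  -- Fine–Wilf on the overlap `T[k+1..k+3τ-1)`; the gcd extends to both windows, and
  -- minimality of `p` and `q` forces `p = p.gcd q = q`.
  have hg : HasPeriodOn (idx T) (p.gcd q) (k + 1) (k + 1 + (3 * τ - 2)) :=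
    HasPeriodOn.gcd (hp.mono (by omega) (by omega)) (hq.mono le_rfl (by omega)) (by omega)
  have hg₀ : 0 < p.gcd q := Nat.gcd_pos_of_pos_left q hp0
  have hgk : HasPeriodOn (idx T) (p.gcd q) k (k + (3 * τ - 1)) :=
    hp.extend_left (hg.mono le_rfl (by omega)) hp0 (Nat.gcd_dvd_left p q) (by omega)
  have hgk₁ : HasPeriodOn (idx T) (p.gcd q) (k + 1) (k + 1 + (3 * τ - 1)) := by
    rw [show k + 1 + (3 * τ - 1) = k + 1 + (3 * τ - 2) + 1 by omega] at hq ⊢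
    exact hq.extend_right hg hq0 (Nat.gcd_dvd_right p q) (by omega)
  have hgp : p.gcd q ≤ p := Nat.gcd_le_left q hp0
  have hgq : p.gcd q ≤ q := Nat.gcd_le_right p hq0
  have hpg : p ≤ p.gcd q :=
    per_le_of_isPeriod ((isPeriod_window_iff hτ hk.1 hk.2.1).mpr ⟨hg₀, by omega, hgk⟩)
  have hqg : q ≤ p.gcd q :=
    per_le_of_isPeriod ((isPeriod_window_iff hτ hk₁.1 hk₁.2.1).mpr ⟨hg₀, by omega, hgk₁⟩)
  omega

theorem per_window_eq_of_forall_mem_R (hτ : 1 ≤ τ) (hjk : j ≤ k)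
    (hrun : ∀ i, j ≤ i → i ≤ k → i ∈ R T τ) : per (window T τ k) = per (window T τ j) := by
  induction k, hjk using Nat.le_induction with
  | base => rfl
  | succ k hjk ih =>
    rw [per_window_succ (hrun k hjk (by omega)) (hrun (k + 1) (by omega) le_rfl) hτ,
      ih fun i h₁ h₂ => hrun i h₁ (by omega)]

theorem exists_run_end (hj : j ∈ R T τ) :
    ∃ m, j < m ∧ m ∉ R T τ ∧ (∀ k, j ≤ k → k < m → k ∈ R T τ) ∧
      rend T τ j = m + 3 * τ - 2 := by
  have hne : {k | j ≤ k ∧ k ∉ R T τ}.Nonempty :=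
    ⟨T.length + 3, show j ≤ T.length + 3 ∧ T.length + 3 ∉ R T τ from
      ⟨by have := hj.2.1; omega, fun h => by have := h.2.1; omega⟩⟩
  obtain ⟨hjm, hm⟩ : j ≤ sInf {k | j ≤ k ∧ k ∉ R T τ} ∧ sInf {k | j ≤ k ∧ k ∉ R T τ} ∉ R T τ :=
    Nat.sInf_mem hne
  refine ⟨_, lt_of_le_of_ne hjm fun h => hm (h ▸ hj), hm, fun k hjk hkm => ?_, rfl⟩
  by_contra hk
  exact (Nat.sInf_le (show k ∈ {k | j ≤ k ∧ k ∉ R T τ} from ⟨hjk, hk⟩)).not_gt hkm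

theorem rend_bounds (hj : j ∈ R T τ) (hτ : 1 ≤ τ) :
    j + (3 * τ - 1) ≤ rend T τ j ∧ rend T τ j ≤ T.length + 1 := by
  obtain ⟨m, hjm, -, hrun, hrend⟩ := exists_run_end hj
  have := (hrun (m - 1) (by omega) (by omega)).2.1
  omega

theorem hasPeriodOn_rend (hj : j ∈ R T τ) (hτ : 1 ≤ τ) :
    HasPeriodOn (idx T) (per (window T τ j)) j (rend T τ j) := by
  obtain ⟨m, hjm, -, hrun, hrend⟩ := exists_run_end hj
  intro x hx hxr
  -- `x` lies in the window of the run member `min x (m - 1)`.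
  set k := min x (m - 1)
  have hk : k ∈ R T τ := hrun k (by omega) (by omega)
  have hper : per (window T τ k) = per (window T τ j) :=
    per_window_eq_of_forall_mem_R hτ (by omega) fun i hi₁ hi₂ => hrun i hi₁ (by omega)
  have hp3 : 3 * per (window T τ k) ≤ τ := hk.2.2
  have hspec := (per_window_spec hk hτ).2
  rw [hper] at hp3 hspec
  exact hspec x (by omega) (by omega)

theorem idx_rend_sub_ne (hj : j ∈ R T τ) (hτ : 1 ≤ τ) (hn : rend T τ j ≤ T.length) :
    idx T (rend T τ j - per (window T τ j)) ≠ idx T (rend T τ j) := by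
  -- Otherwise the window at `m`, the first position past the run, would have period `p`.
  intro heq
  obtain ⟨m, hjm, hm, -, hrend⟩ := exists_run_end hj
  obtain ⟨hp0, -⟩ := per_window_spec hj hτ
  have hp3 : 3 * per (window T τ j) ≤ τ := hj.2.2
  have hper : HasPeriodOn (idx T) (per (window T τ j)) m (m + (3 * τ - 1)) := by
    have := ((hasPeriodOn_rend hj hτ).mono hjm.le le_rfl).snoc heq
    rwa [hrend, show m + 3 * τ - 2 + 1 = m + (3 * τ - 1) by omega] at this
  refine hm ⟨by omega, by omega, ?_⟩
  have := per_le_of_isPeriod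
    ((isPeriod_window_iff hτ (by omega) (by omega)).mpr ⟨hp0, by omega, hper⟩)
  exact (Nat.mul_le_mul_left 3 this).trans hp3

end Run

section Members

variable {T : List ℕ} {τ s j k k₁ k₂ : ℕ} {H : List ℕ}

theorem Lhead_spec (hk : k ∈ R T τ) (hτ : 1 ≤ τ) :
    Lhead T τ k < per (window T τ k) ∧
      sub T (k + Lhead T τ k) (k + Lhead T τ k + per (window T τ k)) = Lroot T τ k := by
  have hp0 := (per_window_spec hk hτ).1
  set p := per (window T τ k)
  set roots := (Finset.range p).image fun t => sub T (k + t) (k + t + p)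
  have hne : roots.Nonempty := (Finset.nonempty_range_iff.mpr (by omega)).image _
  have hroot : Lroot T τ k = roots.min' hne := by
    change WithTop.untopD [] roots.min = _
    rw [← Finset.coe_min' hne, WithTop.untopD_coe]
  obtain ⟨t, ht, hteq⟩ := Finset.mem_image.mp (hroot ▸ Finset.min'_mem roots hne)
  exact Nat.sInf_mem (s := {s | s < p ∧ sub T (k + s) (k + s + p) = Lroot T τ k})
    ⟨t, Finset.mem_range.mp ht, hteq⟩

theorem mem_RsH_spec (hk : k ∈ RsH T τ s H) (hτ : 1 ≤ τ) :
    H.length = per (window T τ k) ∧ s < H.length ∧ sub T (k + s) (k + s + H.length) = H := by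
  obtain ⟨hkR, rfl, rfl⟩ := hk
  obtain ⟨hs, hsub⟩ := Lhead_spec hkR hτ
  have hp3 : 3 * per (window T τ k) ≤ τ := hkR.2.2
  have hlen : (Lroot T τ k).length = per (window T τ k) := by
    rw [← hsub, sub_eq_map_range (by have := hkR.1; omega) (by have := hkR.2.1; omega)]
    simp
  rw [hlen]
  exact ⟨rfl, hs, hsub⟩

theorem idx_add_eq_of_mem_RsH (hk₁ : k₁ ∈ RsH T τ s H) (hk₂ : k₂ ∈ RsH T τ s H) (hτ : 1 ≤ τ)
    {i : ℕ} (hi₁ : k₁ + i < rend T τ k₁) (hi₂ : k₂ + i < rend T τ k₂) :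
    idx T (k₁ + i) = idx T (k₂ + i) := by
  obtain ⟨hp₁, hs, hsub₁⟩ := mem_RsH_spec hk₁ hτ
  obtain ⟨hp₂, -, hsub₂⟩ := mem_RsH_spec hk₂ hτ
  have hr₁ := rend_bounds hk₁.1 hτ
  have hr₂ := rend_bounds hk₂.1 hτ
  have hp3 : 3 * H.length ≤ τ := hp₁ ▸ hk₁.1.2.2
  have h₁ := hk₁.1.1
  have h₂ := hk₂.1.1
  have hagree : ∀ t < H.length, idx T (k₁ + s + t) = idx T (k₂ + s + t) := by
    have := hsub₁.trans hsub₂.symm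
    rw [sub_eq_map_range (by omega) (by omega), sub_eq_map_range (by omega) (by omega)] at this
    simpa [List.map_inj_left] using this
  exact HasPeriodOn.eq_of_agree (hp₁ ▸ hasPeriodOn_rend hk₁.1 hτ)
    (hp₂ ▸ hasPeriodOn_rend hk₂.1 hτ) hs hagree (by omega) (by omega) hi₁ hi₂

theorem window_eq_of_mem_RsH (hk₁ : k₁ ∈ RsH T τ s H) (hk₂ : k₂ ∈ RsH T τ s H) (hτ : 1 ≤ τ) :
    window T τ k₁ = window T τ k₂ := by
  have hr₁ := rend_bounds hk₁.1 hτ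
  have hr₂ := rend_bounds hk₂.1 hτ
  exact (window_eq_window_iff hτ hk₁.1.1 hk₁.1.2.1 hk₂.1.1 hk₂.1.2.1).mpr fun i hi =>
    idx_add_eq_of_mem_RsH hk₁ hk₂ hτ (by omega) (by omega)

theorem mem_RsH_of_window_eq (hk : k ∈ RsH T τ s H) (hτ : 1 ≤ τ) {k' : ℕ} (hk'₁ : 1 ≤ k')
    (hk'n : k' + 3 * τ ≤ T.length + 2) (hw : window T τ k' = window T τ k) :
    k' ∈ RsH T τ s H := by
  obtain ⟨hkR, rfl, rfl⟩ := hk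
  have hper : per (sub T k' (k' + 3 * τ - 1)) = per (sub T k (k + 3 * τ - 1)) := congrArg per hw
  have hp3 : 3 * per (window T τ k) ≤ τ := hkR.2.2
  have hpt := (window_eq_window_iff hτ hk'₁ hk'n hkR.1 hkR.2.1).mp hw
  have hsub : ∀ t < per (window T τ k), sub T (k' + t) (k' + t + per (window T τ k)) =
      sub T (k + t) (k + t + per (window T τ k)) := by
    intro t ht
    rw [sub_eq_map_range (by omega) (by omega),
      sub_eq_map_range (by have := hkR.1; omega) (by have := hkR.2.1; omega)]
    refine List.map_congr_left fun i hi => ?_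
    rw [List.mem_range] at hi
    simpa [add_assoc] using hpt (t + i) (by omega)
  simp only [window] at hsub
  have hroot : Lroot T τ k' = Lroot T τ k := by
    simp only [Lroot, hper]
    rw [Finset.image_congr fun t ht => hsub t (Finset.mem_coe.mp ht |> Finset.mem_range.mp)]
  refine ⟨⟨hk'₁, hk'n, hper ▸ hkR.2.2⟩, hroot, ?_⟩
  simp only [Lhead, hper, hroot]
  congr 1
  ext t
  exact and_congr_right fun ht => by rw [hsub t ht]

theorem le_LCE_iff_mem_RsH (hj : j ∈ RsH T τ s H) (hτ : 1 ≤ τ) (hk : 1 ≤ k) :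
    3 * τ - 1 ≤ LCE T j k ↔ k ∈ RsH T τ s H := by
  rw [LCE, le_lcp_iff, ← window_eq_take_suf, ← window_eq_take_suf, length_suf hj.1.1,
    length_suf hk]
  have := hj.1.2.1
  constructor
  · rintro ⟨-, hkn, hw⟩
    exact mem_RsH_of_window_eq hj hτ hk (by omega) hw.symm
  · intro hk'
    have := hk'.1.2.1
    exact ⟨by omega, by omega, window_eq_of_mem_RsH hj hk' hτ⟩

end Members

section Order

variable {T : List ℕ} {τ s j k k₁ k₂ : ℕ} {H : List ℕ}

theorem typ_eq_one_iff : typ T τ k = 1 ↔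
    rend T τ k ≤ T.length ∧ idx T (rend T τ k - per (window T τ k)) < idx T (rend T τ k) := by
  unfold typ window
  split_ifs with h <;> simp [h]

theorem typ_eq_one_or_eq_neg_one : typ T τ k = 1 ∨ typ T τ k = -1 := by
  unfold typ
  split_ifs <;> simp

theorem idx_rend_lt_of_typ_eq_neg_one (hk : k ∈ R T τ) (hτ : 1 ≤ τ) (htyp : typ T τ k = -1)
    (hn : rend T τ k ≤ T.length) :
    idx T (rend T τ k) < idx T (rend T τ k - per (window T τ k)) := by
  have hne := idx_rend_sub_ne hk hτ hn
  have hnlt : ¬ idx T (rend T τ k - per (window T τ k)) < idx T (rend T τ k) := fun h => by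
    simpa [htyp] using typ_eq_one_iff.mpr ⟨hn, h⟩
  omega

theorem idx_add_sub_eq_of_mem_RsH (hk : k ∈ RsH T τ s H) (hτ : 1 ≤ τ) {i : ℕ}
    (hpi : H.length ≤ i) (hi : k + i < rend T τ k) :
    idx T (k + (i - H.length)) = idx T (k + i) := by
  have h := hasPeriodOn_rend hk.1 hτ (k + (i - H.length)) (by omega)
  rw [← (mem_RsH_spec hk hτ).1] at h
  rw [h (by omega)]
  congr 1
  omega

theorem suf_lt_suf_of_typ_eq_neg_one_of_lt (hk₁ : k₁ ∈ RsH T τ s H) (hk₂ : k₂ ∈ RsH T τ s H)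
    (hτ : 1 ≤ τ) (htyp : typ T τ k₁ = -1) (hd : rend T τ k₁ - k₁ < rend T τ k₂ - k₂) :
    suf T k₁ < suf T k₂ := by
  obtain ⟨hp, hs, -⟩ := mem_RsH_spec hk₁ hτ
  have hr₁ := rend_bounds hk₁.1 hτ
  have hr₂ := rend_bounds hk₂.1 hτ
  have hp3 : 3 * H.length ≤ τ := hp ▸ hk₁.1.2.2
  refine suf_lt_suf_of_agree (i := rend T τ k₁ - k₁) hk₁.1.1 hk₂.1.1
    (fun t ht => idx_add_eq_of_mem_RsH hk₁ hk₂ hτ (by omega) (by omega)) (by omega) ?_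
  rcases Nat.lt_or_ge T.length (rend T τ k₁) with hend | hn
  · left; omega
  refine Or.inr ⟨by omega, ?_⟩
  calc idx T (k₁ + (rend T τ k₁ - k₁)) = idx T (rend T τ k₁) := by congr 1; omega
    _ < idx T (rend T τ k₁ - H.length) := hp ▸ idx_rend_lt_of_typ_eq_neg_one hk₁.1 hτ htyp hn
    _ = idx T (k₁ + (rend T τ k₁ - k₁ - H.length)) := by congr 1; omega
    _ = idx T (k₂ + (rend T τ k₁ - k₁ - H.length)) :=
      idx_add_eq_of_mem_RsH hk₁ hk₂ hτ (by omega) (by omega)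
    _ = idx T (k₂ + (rend T τ k₁ - k₁)) := idx_add_sub_eq_of_mem_RsH hk₂ hτ (by omega) (by omega)

theorem suf_lt_suf_of_typ_eq_one_of_lt (hk₁ : k₁ ∈ RsH T τ s H) (hk₂ : k₂ ∈ RsH T τ s H)
    (hτ : 1 ≤ τ) (htyp : typ T τ k₁ = 1) (hd : rend T τ k₁ - k₁ < rend T τ k₂ - k₂) :
    suf T k₂ < suf T k₁ := by
  obtain ⟨hp, hs, -⟩ := mem_RsH_spec hk₁ hτ
  obtain ⟨hn, hlt⟩ := typ_eq_one_iff.mp htyp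
  rw [← hp] at hlt
  have hr₁ := rend_bounds hk₁.1 hτ
  have hr₂ := rend_bounds hk₂.1 hτ
  have hp3 : 3 * H.length ≤ τ := hp ▸ hk₁.1.2.2
  refine suf_lt_suf_of_agree (i := rend T τ k₁ - k₁) hk₂.1.1 hk₁.1.1
    (fun t ht => (idx_add_eq_of_mem_RsH hk₁ hk₂ hτ (by omega) (by omega)).symm) (by omega)
    (Or.inr ⟨by omega, ?_⟩)
  calc idx T (k₂ + (rend T τ k₁ - k₁))
      = idx T (k₂ + (rend T τ k₁ - k₁ - H.length)) :=
        (idx_add_sub_eq_of_mem_RsH hk₂ hτ (by omega) (by omega)).symm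
    _ = idx T (k₁ + (rend T τ k₁ - k₁ - H.length)) :=
      idx_add_eq_of_mem_RsH hk₂ hk₁ hτ (by omega) (by omega)
    _ = idx T (rend T τ k₁ - H.length) := by congr 1; omega
    _ < idx T (rend T τ k₁) := hlt
    _ = idx T (k₁ + (rend T τ k₁ - k₁)) := by congr 1; omega

theorem suf_lt_suf_of_typ_eq_neg_one_of_typ_eq_one_of_eq (hk₁ : k₁ ∈ RsH T τ s H)
    (hk₂ : k₂ ∈ RsH T τ s H) (hτ : 1 ≤ τ) (htyp₁ : typ T τ k₁ = -1) (htyp₂ : typ T τ k₂ = 1)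
    (hd : rend T τ k₁ - k₁ = rend T τ k₂ - k₂) : suf T k₁ < suf T k₂ := by
  obtain ⟨hp, hs, -⟩ := mem_RsH_spec hk₁ hτ
  obtain ⟨hp₂, -, -⟩ := mem_RsH_spec hk₂ hτ
  obtain ⟨hn₂, hlt₂⟩ := typ_eq_one_iff.mp htyp₂
  rw [← hp₂] at hlt₂
  have hr₁ := rend_bounds hk₁.1 hτ
  have hr₂ := rend_bounds hk₂.1 hτ
  have hp3 : 3 * H.length ≤ τ := hp ▸ hk₁.1.2.2
  refine suf_lt_suf_of_agree (i := rend T τ k₁ - k₁) hk₁.1.1 hk₂.1.1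
    (fun t ht => idx_add_eq_of_mem_RsH hk₁ hk₂ hτ (by omega) (by omega)) (by omega) ?_
  rcases Nat.lt_or_ge T.length (rend T τ k₁) with hend | hn
  · left; omega
  refine Or.inr ⟨by omega, ?_⟩
  calc idx T (k₁ + (rend T τ k₁ - k₁)) = idx T (rend T τ k₁) := by congr 1; omega
    _ < idx T (rend T τ k₁ - H.length) := hp ▸ idx_rend_lt_of_typ_eq_neg_one hk₁.1 hτ htyp₁ hn
    _ = idx T (k₁ + (rend T τ k₁ - k₁ - H.length)) := by congr 1; omega
    _ = idx T (k₂ + (rend T τ k₁ - k₁ - H.length)) :=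
      idx_add_eq_of_mem_RsH hk₁ hk₂ hτ (by omega) (by omega)
    _ = idx T (rend T τ k₂ - H.length) := by congr 1; omega
    _ < idx T (rend T τ k₂) := hlt₂
    _ = idx T (k₂ + (rend T τ k₁ - k₁)) := by congr 1; omega

theorem suf_lt_suf_of_typ_eq_neg_one_of_typ_eq_one (hk₁ : k₁ ∈ RsH T τ s H)
    (hk₂ : k₂ ∈ RsH T τ s H) (hτ : 1 ≤ τ) (htyp₁ : typ T τ k₁ = -1) (htyp₂ : typ T τ k₂ = 1) :
    suf T k₁ < suf T k₂ := by
  rcases lt_trichotomy (rend T τ k₁ - k₁) (rend T τ k₂ - k₂) with hd | hd | hd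
  · exact suf_lt_suf_of_typ_eq_neg_one_of_lt hk₁ hk₂ hτ htyp₁ hd
  · exact suf_lt_suf_of_typ_eq_neg_one_of_typ_eq_one_of_eq hk₁ hk₂ hτ htyp₁ htyp₂ hd
  · exact suf_lt_suf_of_typ_eq_one_of_lt hk₂ hk₁ hτ htyp₂ hd

theorem Lexp_eq_of_mem_RsH (hk : k ∈ RsH T τ s H) (hτ : 1 ≤ τ) :
    Lexp T τ k = (rend T τ k - k - s) / H.length := by
  rw [(mem_RsH_spec hk hτ).1, ← hk.2.2]
  rfl

theorem suf_lt_suf_of_Lexp_lt (hk₁ : k₁ ∈ RsH T τ s H) (hk₂ : k₂ ∈ RsH T τ s H) (hτ : 1 ≤ τ)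
    (htyp : typ T τ k₁ = -1) (h : Lexp T τ k₁ < Lexp T τ k₂) : suf T k₁ < suf T k₂ := by
  refine suf_lt_suf_of_typ_eq_neg_one_of_lt hk₁ hk₂ hτ htyp (not_le.mp fun hd => h.not_ge ?_)
  rw [Lexp_eq_of_mem_RsH hk₁ hτ, Lexp_eq_of_mem_RsH hk₂ hτ]
  exact Nat.div_le_div_right (by omega)

theorem suf_le_suf_iff (hj : j ∈ RsH T τ s H) (hjtyp : typ T τ j = -1) (hk : k ∈ RsH T τ s H)
    (hτ : 1 ≤ τ) :
    suf T k ≤ suf T j ↔ typ T τ k = -1 ∧ Lexp T τ k ≤ Lexp T τ j ∧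
      ¬(Lexp T τ k = Lexp T τ j ∧ suf T j < suf T k) := by
  constructor
  · intro hle
    refine ⟨typ_eq_one_or_eq_neg_one.resolve_left fun h =>
      (suf_lt_suf_of_typ_eq_neg_one_of_typ_eq_one hj hk hτ hjtyp h).not_ge hle,
      not_lt.mp fun h => (suf_lt_suf_of_Lexp_lt hj hk hτ hjtyp h).not_ge hle,
      fun h => h.2.not_ge hle⟩
  · rintro ⟨htyp, hexp, hnot⟩
    rcases hexp.lt_or_eq with hlt | heq
    · exact (suf_lt_suf_of_Lexp_lt hk hj hτ htyp hlt).le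
    · exact not_lt.mp fun h => hnot ⟨heq, h⟩

theorem setOf_le_LCE_eq_sdiff (hj : j ∈ Rminus T τ) (hjH : j ∈ RsH T τ s H) (hτ : 1 ≤ τ) :
    {k | 1 ≤ k ∧ k ≤ T.length ∧ 3 * τ - 1 ≤ LCE T j k ∧ suf T k ≤ suf T j} =
      {k | k ∈ RminusSH T τ s H ∧ Lexp T τ k ≤ Lexp T τ j} \
        {k | k ∈ RminusSH T τ s H ∧ Lexp T τ k = Lexp T τ j ∧ suf T j < suf T k} := by
  ext k
  have hmem : k ∈ RminusSH T τ s H ↔ k ∈ RsH T τ s H ∧ typ T τ k = -1 :=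
    ⟨fun h => ⟨h.2, h.1.2⟩, fun h => ⟨⟨h.1.1, h.2⟩, h.1⟩⟩
  simp only [Set.mem_ofPred_eq, Set.mem_sdiff, hmem]
  constructor
  · rintro ⟨hk₁, -, hlce, hle⟩
    have hk := (le_LCE_iff_mem_RsH hjH hτ hk₁).mp hlce
    obtain ⟨htyp, hexp, hnot⟩ := (suf_le_suf_iff hjH hj.2 hk hτ).mp hle
    exact ⟨⟨⟨hk, htyp⟩, hexp⟩, fun h => hnot h.2⟩
  · rintro ⟨⟨⟨hk, htyp⟩, hexp⟩, hnot⟩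
    have := hk.1.2.1
    exact ⟨hk.1.1, by omega, (le_LCE_iff_mem_RsH hjH hτ hk.1.1).mpr hk,
      (suf_le_suf_iff hjH hj.2 hk hτ).mpr ⟨htyp, hexp, fun h => hnot ⟨⟨hk, htyp⟩, h⟩⟩⟩

theorem finite_R : (R T τ).Finite :=
  (Set.finite_Iic (T.length + 2)).subset fun _ hk => Set.mem_Iic.mpr (by have := hk.2.1; omega)

end Order

theorem statement_5_general
    (n τ : ℕ) (T : List ℕ)
    (hτ : 1 ≤ τ)
    (hlen : T.length = n)
    (j : ℕ) (hj : j ∈ Rminus T τ)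
    (s : ℕ) (hs : s = Lhead T τ j) (H : List ℕ) (hH : H = Lroot T τ j)
    (δ δa δs : ℕ)
    (hδ : δ = Set.ncard {j' | 1 ≤ j' ∧ j' ≤ n ∧ 3 * τ - 1 ≤ LCE T j j' ∧
      suf T j' ≤ suf T j})
    (hδa : δa = Set.ncard {j' | j' ∈ RminusSH T τ s H ∧ Lexp T τ j' ≤ Lexp T τ j})
    (hδs : δs = Set.ncard {j' | j' ∈ RminusSH T τ s H ∧ Lexp T τ j' = Lexp T τ j ∧
      suf T j < suf T j'}) :
    (δ : ℤ) = (δa : ℤ) - (δs : ℤ) := by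
  subst hlen hδ hδa hδs
  have hsub : {k | k ∈ RminusSH T τ s H ∧ Lexp T τ k = Lexp T τ j ∧ suf T j < suf T k} ⊆
      {k | k ∈ RminusSH T τ s H ∧ Lexp T τ k ≤ Lexp T τ j} := fun _ hk => ⟨hk.1, hk.2.1.le⟩
  have hfin : {k | k ∈ RminusSH T τ s H ∧ Lexp T τ k ≤ Lexp T τ j}.Finite :=
    finite_R.subset fun _ hk => hk.1.1.1
  rw [setOf_le_LCE_eq_sdiff hj ⟨hj.1, hH.symm, hs.symm⟩ hτ, Set.ncard_sdiff' hsub hfin,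
    Nat.cast_sub (Set.ncard_le_ncard hsub hfin)]

/-- Lemma: `δ(j) = δᵃ(j) − δˢ(j)` for `j ∈ R⁻`. -/
theorem statement_5
    (σ n τ : ℕ) (T : List ℕ)
    (hσ : 2 ≤ σ) (hn : 2 ≤ n) (hτ : 1 ≤ τ)
    (hlen : T.length = n) (halph : ∀ c ∈ T, c < σ)
    (hlast : idx T n = 0) (huniq : ∀ i, 1 ≤ i → i < n → idx T i ≠ 0)
    (j : ℕ) (hj : j ∈ Rminus T τ)
    (s : ℕ) (hs : s = Lhead T τ j) (H : List ℕ) (hH : H = Lroot T τ j)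
    (δ δa δs : ℕ)
    (hδ : δ = Set.ncard {j' | 1 ≤ j' ∧ j' ≤ n ∧ 3 * τ - 1 ≤ LCE T j j' ∧
      suf T j' ≤ suf T j})
    (hδa : δa = Set.ncard {j' | j' ∈ RminusSH T τ s H ∧ Lexp T τ j' ≤ Lexp T τ j})
    (hδs : δs = Set.ncard {j' | j' ∈ RminusSH T τ s H ∧ Lexp T τ j' = Lexp T τ j ∧
      suf T j < suf T j'}) :
    (δ : ℤ) = (δa : ℤ) - (δs : ℤ) :=
  statement_5_general n τ T hτ hlen j hj s hs H hH δ δa δs hδ hδa hδs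
end CSA
end

section
/- Let j ∈ [1..n−3τ+2] with j ∉ R, and let X ∈ D be a prefix of T[j..n]. Denote δ_text = |X| − 2τ, b_X = RangeBeg(X,T), and δ(j) = |{j′ ∈ [1..n] : LCE(j,j′) ≥ |X| and T[j′..n] ⪯ T[j..n]}|. Then: (1) ISA[j] = b_X + δ(j); and (2) if y ∈ [1..n′] is such that s^lex_y = j + δ_text, then δ(j) = |{i ∈ [1..y] : the reverse of X is a prefix of W[i]}|. -/
open scoped Classical

namespace CSA

/-
Since `X` is a prefix of `T[j..n]`, a suffix is `⪯ T[j..n]` exactly when it is `≺ X` or it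
starts with `X` and is `⪯ T[j..n]`; the first kind is counted by `RangeBeg`, the second by `δ(j)`.

Write `X = T[i..q+2τ)` with `q = succ_S(i)` and `δ = |X| - 2τ = q - i`; density puts `q` in `S`.
By consistency, every occurrence `a` of `X` has `a + δ ∈ S`, and `a ↦ a + δ` identifies the
occurrences of `X` with the synchronizing positions `s` whose window `T^∞[s-δ..s+2τ)` equals `X`,
i.e. those with `Xᴿ` a prefix of their `W`-string. Stripping the common prefix of length `δ`,
`T[a..n] ⪯ T[j..n]` iff `T[a+δ..n] ⪯ T[j+δ..n] = T[s^lex_y..n]`, i.e. iff the index of `a + δ` in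
the lexicographic enumeration is at most `y`.
-/

section Lex

variable {α : Type*} [LinearOrder α]

theorem append_lt_append_left_iff (P A B : List α) : P ++ A < P ++ B ↔ A < B := by
  refine ⟨fun h => ?_, List.append_left_lt⟩
  rcases lt_trichotomy A B with hAB | rfl | hBA
  · exact hAB
  · exact absurd h (lt_irrefl _)
  · exact absurd (List.append_left_lt hBA) (not_lt_of_gt h)

theorem append_le_append_left_iff (P A B : List α) : P ++ A ≤ P ++ B ↔ A ≤ B := by
  simp only [← not_lt, append_lt_append_left_iff]

theorem _root_.List.IsPrefix.le' {A B : List α} (h : A <+: B) : A ≤ B :=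
  not_lt.1 (List.IsPrefix.le h)

theorem isPrefix_of_le_of_le {X A C : List α} (hXC : X <+: C) (hXA : X ≤ A) (hAC : A ≤ C) :
    X <+: A := by
  induction X generalizing A C with
  | nil => exact List.nil_prefix
  | cons x X ih =>
    cases C with
    | nil => simp at hXC
    | cons c C =>
    obtain ⟨rfl, hXC'⟩ := List.cons_prefix_cons.1 hXC
    cases A with
    | nil => exact absurd hXA (not_le.2 (List.nil_lt_cons _ _))
    | cons a A =>
      rw [← not_lt, List.cons_lt_cons_iff] at hXA hAC
      push Not at hXA hAC
      obtain rfl : a = x := le_antisymm hAC.1 hXA.1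
      exact List.cons_prefix_cons.2 ⟨rfl, ih hXC' (hXA.2 rfl) (hAC.2 rfl)⟩

theorem le_iff_lt_or_isPrefix_and_le {X A B : List α} (hXB : X <+: B) :
    A ≤ B ↔ A < X ∨ (X <+: A ∧ A ≤ B) := by
  refine ⟨fun hAB => ?_, ?_⟩
  · rcases lt_or_ge A X with hAX | hXA
    · exact Or.inl hAX
    · exact Or.inr ⟨isPrefix_of_le_of_le hXB hXA hAB, hAB⟩
  · rintro (hAX | ⟨-, hAB⟩)
    · exact hAX.le.trans hXB.le'
    · exact hAB

end Lex

theorem lcp_cons (a b : ℕ) (A B : List ℕ) :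
    lcp (a :: A) (b :: B) = if a = b then lcp A B + 1 else 0 := by
  by_cases h : a = b <;> simp [lcp, h]

theorem le_lcp_iff_isPrefix {X A B : List ℕ} (hXA : X <+: A) :
    X.length ≤ lcp A B ↔ X <+: B := by
  induction X generalizing A B with
  | nil => simp
  | cons x X ih =>
    cases A with
    | nil => simp at hXA
    | cons a A =>
    obtain ⟨rfl, hXA'⟩ := List.cons_prefix_cons.1 hXA
    cases B with
    | nil => simp [lcp]
    | cons b B =>
      by_cases hxb : x = b
      · simp [lcp_cons, hxb, ih hXA']
      · simp [lcp_cons, hxb]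


theorem suf_add (T : List ℕ) {a : ℕ} (ha : 1 ≤ a) (d : ℕ) : suf T (a + d) = (suf T a).drop d := by
  rw [suf, suf, List.drop_drop]
  congr 1
  omega

theorem add_length_le_of_isPrefix_suf {T X : List ℕ} {a : ℕ} (ha : 1 ≤ a) (hX : X ≠ [])
    (h : X <+: suf T a) : a + X.length ≤ T.length + 1 := by
  have := h.length_le
  have := List.length_pos_iff.2 hX
  simp only [suf, List.length_drop] at *
  omega

theorem isPrefix_suf_iff_forall_idx {T X : List ℕ} {a : ℕ} (ha : 1 ≤ a)
    (h : a + X.length ≤ T.length + 1) :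
    X <+: suf T a ↔ ∀ k < X.length, idx T (a + k) = X.getD k 0 := by
  rw [List.prefix_iff_eq_take, eq_comm, List.ext_getElem_iff]
  simp only [suf, idx, List.length_take, List.length_drop, List.getElem_take, List.getElem_drop]
  refine ⟨fun ⟨_, hget⟩ k hk => ?_, fun hget => ⟨by omega, fun k hk₁ hk₂ => ?_⟩⟩
  · rw [List.getD_eq_getElem _ _ hk, ← hget k (by omega) hk, List.getD_eq_getElem _ _ (by omega)]
    congr 1
    omega
  · have hk := hget k hk₂
    rw [List.getD_eq_getElem _ _ hk₂, List.getD_eq_getElem _ _ (by omega)] at hk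
    rw [← hk]
    congr 1
    omega

theorem sub_eq_take_drop_of_isPrefix {T X : List ℕ} {a k m : ℕ} (ha : 1 ≤ a)
    (h : X <+: suf T a) (hkm : k + m ≤ X.length) :
    sub T (a + k) (a + k + m) = (X.drop k).take m := by
  rw [List.prefix_iff_eq_take.1 h, List.drop_take, List.take_take, sub, ← suf, suf_add T ha,
    Nat.add_sub_cancel_left]
  congr 1
  omega

theorem suf_le_suf_iff_of_isPrefix {T X : List ℕ} {a b d : ℕ} (ha : 1 ≤ a) (hb : 1 ≤ b)
    (hXa : X <+: suf T a) (hXb : X <+: suf T b) (hd : d ≤ X.length) :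
    suf T a ≤ suf T b ↔ suf T (a + d) ≤ suf T (b + d) := by
  have hsplit : ∀ c, 1 ≤ c → X <+: suf T c → suf T c = X.take d ++ suf T (c + d) := by
    intro c hc hXc
    rw [suf_add T hc, List.prefix_iff_eq_take.1 hXc, List.take_take, min_eq_left hd,
      List.take_append_drop]
  rw [hsplit a ha hXa, hsplit b hb hXb, append_le_append_left_iff]

theorem ISA_eq_RangeBeg_add_ncard {T X : List ℕ} {j : ℕ} (hX : X <+: suf T j) :
    ISA T j = RangeBeg X T +
      {j' | 1 ≤ j' ∧ j' ≤ T.length ∧ X <+: suf T j' ∧ suf T j' ≤ suf T j}.ncard := by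
  have hfin : ∀ p : ℕ → Prop, {i | 1 ≤ i ∧ i ≤ T.length ∧ p i}.Finite := fun p =>
    (Set.finite_Icc 1 T.length).subset fun i hi => ⟨hi.1, hi.2.1⟩
  have hdisj : Disjoint {i | 1 ≤ i ∧ i ≤ T.length ∧ suf T i < X}
      {j' | 1 ≤ j' ∧ j' ≤ T.length ∧ X <+: suf T j' ∧ suf T j' ≤ suf T j} :=
    Set.disjoint_left.2 fun i hlt hpre => not_le.2 hlt.2.2 hpre.2.2.1.le'
  rw [ISA, RangeBeg, ← Set.ncard_union_eq hdisj (hfin _) (hfin _)]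
  congr 1
  ext i
  simp only [Set.mem_ofPred_eq, Set.mem_union]
  rw [le_iff_lt_or_isPrefix_and_le hX]
  tauto


theorem tinf_natCast {T : List ℕ} {m : ℕ} (h1 : 1 ≤ m) (h2 : m ≤ T.length) :
    tinf T m = idx T m := by
  change idx T ((((m : ℤ) - 1) % T.length).toNat + 1) = _
  rw [Int.emod_eq_of_lt (by omega) (by omega)]
  congr 1
  omega

theorem tinf_zero (T : List ℕ) : tinf T 0 = idx T T.length := by
  rcases Nat.eq_zero_or_pos T.length with h | h
  · simp [List.length_eq_zero_iff.1 h, tinf, idx]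
  · change idx T ((((0 : ℤ) - 1) % T.length).toNat + 1) = _
    rw [show (0 : ℤ) - 1 = (T.length - 1) + T.length * (-1) by ring,
      Int.add_mul_emod_self_left, Int.emod_eq_of_lt (by omega) (by omega)]
    congr 1
    omega

theorem reverse_isPrefix_Wstr_iff_tinf {T X : List ℕ} {τ : ℕ} {slex : ℕ → ℕ} {i : ℕ}
    (hX : X.length ≤ 3 * τ) :
    X.reverse <+: Wstr T τ slex i ↔
      ∀ k < X.length, tinf T ((slex i : ℤ) + 2 * τ - X.length + k) = X.getD k 0 := by
  have hcast : ((List.range (3 * τ) : List ℕ) : List ℤ) = (List.range (3 * τ)).map (↑) := by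
    simp [List.map_eq_flatMap]
  rw [Wstr, hcast, List.reverse_prefix, List.suffix_iff_eq_drop, eq_comm, List.ext_getElem_iff]
  simp only [List.length_drop, List.length_map, List.length_range, List.getElem_drop,
    List.getElem_map, List.getElem_range]
  refine ⟨fun ⟨_, h⟩ k hk => ?_, fun h => ⟨by omega, fun k _ hk => ?_⟩⟩
  · rw [List.getD_eq_getElem _ _ hk, ← h k (by omega) hk]
    congr 1
    omega
  · rw [← List.getD_eq_getElem _ 0 hk, ← h k hk]
    congr 1
    omega


theorem reverse_isPrefix_Wstr_iff {T X : List ℕ} {τ : ℕ} {slex : ℕ → ℕ} {i : ℕ}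
    (hlast : idx T T.length = 0) (hX0 : ∀ k < X.length - 2 * τ, X.getD k 0 ≠ 0)
    (hX2 : 2 * τ ≤ X.length) (hX3 : X.length ≤ 3 * τ)
    (hs1 : 1 ≤ slex i) (hs2 : slex i + 2 * τ ≤ T.length + 1) :
    X.reverse <+: Wstr T τ slex i ↔
      X.length - 2 * τ < slex i ∧ X <+: suf T (slex i - (X.length - 2 * τ)) := by
  rw [reverse_isPrefix_Wstr_iff_tinf hX3]
  by_cases hs : X.length - 2 * τ < slex i
  · rw [isPrefix_suf_iff_forall_idx (by omega) (by omega)]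
    refine ⟨fun h => ⟨hs, fun k hk => ?_⟩, fun ⟨_, h⟩ k hk => ?_⟩ <;>
      rw [← h k hk, ← tinf_natCast (by omega) (by omega)] <;> congr 1 <;> omega
  · -- the window would put `T^∞[0] = T[n] = 0` among the first `δ` letters of `X`
    refine iff_of_false (fun h => hX0 (X.length - 2 * τ - slex i) (by omega) ?_) (by tauto)
    rw [← h _ (by omega), ← hlast, ← tinf_zero]
    congr 1
    omega


theorem succS_mem_of_mem {T : List ℕ} {τ : ℕ} {Sync : Set ℕ} {i s : ℕ}
    (hSync : ∀ p ∈ Sync, p + 2 * τ ≤ T.length + 1) (hs : s ∈ Sync) (his : i ≤ s) :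
    succS T τ Sync i ∈ Sync ∧ i ≤ succS T τ Sync i ∧ succS T τ Sync i ≤ s := by
  have hmem : s ∈ {m | i ≤ m ∧ (m ∈ Sync ∨ m = T.length + 2 - 2 * τ)} := ⟨his, Or.inl hs⟩
  obtain ⟨hi, hS⟩ := Nat.sInf_mem ⟨s, hmem⟩
  have hle : succS T τ Sync i ≤ s := Nat.sInf_le hmem
  refine ⟨hS.resolve_right fun h => ?_, hi, hle⟩
  have := hSync s hs
  rw [succS] at hle
  omega

theorem sync_of_mem_Dset {T X : List ℕ} {τ : ℕ} {Sync : Set ℕ}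
    (hSyncRange : ∀ i ∈ Sync, 1 ≤ i ∧ i + 2 * τ ≤ T.length + 1)
    (hCons : ∀ i j : ℕ, 1 ≤ i → i + 2 * τ ≤ T.length + 1 → 1 ≤ j → j + 2 * τ ≤ T.length + 1 →
      sub T i (i + 2 * τ) = sub T j (j + 2 * τ) → (i ∈ Sync ↔ j ∈ Sync))
    (hDens : ∀ i : ℕ, 1 ≤ i → i + 3 * τ ≤ T.length + 2 →
      (Sync ∩ Set.Ico i (i + τ) = ∅ ↔ i ∈ R T τ))
    (hX : X ∈ Dset T τ Sync) :
    2 * τ ≤ X.length ∧ X.length < 3 * τ ∧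
      ∀ a, 1 ≤ a → X <+: suf T a → a + (X.length - 2 * τ) ∈ Sync := by
  obtain ⟨i₀, hi₀, hi₀n, hi₀R, rfl⟩ := hX
  obtain ⟨s, hs, hi₀s, hsτ⟩ :=
    Set.nonempty_iff_ne_empty.2 ((hDens i₀ hi₀ hi₀n).not.2 hi₀R)
  obtain ⟨hq, hi₀q, hqs⟩ := succS_mem_of_mem (fun p hp => (hSyncRange p hp).2) hs hi₀s
  set q := succS T τ Sync i₀
  have hqn := (hSyncRange q hq).2
  have hlen : (sub T i₀ (q + 2 * τ)).length = q + 2 * τ - i₀ := by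
    simp only [sub, List.length_take, List.length_drop]
    omega
  refine ⟨by omega, by omega, fun a ha hXa => ?_⟩
  rw [hlen, show q + 2 * τ - i₀ - 2 * τ = q - i₀ by omega]
  have hwindow := sub_eq_take_drop_of_isPrefix (k := q - i₀) (m := 2 * τ) ha hXa (by omega)
  have hX₀ : sub T i₀ (q + 2 * τ) <+: suf T i₀ := List.take_prefix _ _
  have hwindow₀ := sub_eq_take_drop_of_isPrefix (k := q - i₀) (m := 2 * τ) hi₀ hX₀ (by omega)
  rw [show i₀ + (q - i₀) = q by omega] at hwindow₀
  have hXn := add_length_le_of_isPrefix_suf ha (List.ne_nil_of_length_pos (by rw [hlen]; omega)) hXa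
  exact (hCons _ q (by omega) (by omega) (by omega) hqn (hwindow.trans hwindow₀.symm)).2 hq


theorem ncard_isPrefix_le_eq_ncard_reverse_isPrefix_Wstr {T X : List ℕ} {τ n' j y : ℕ}
    {Sync : Set ℕ} {slex : ℕ → ℕ}
    (hτ : 1 ≤ τ) (hlast : idx T T.length = 0)
    (huniq : ∀ i, 1 ≤ i → i < T.length → idx T i ≠ 0)
    (hSyncRange : ∀ i ∈ Sync, 1 ≤ i ∧ i + 2 * τ ≤ T.length + 1)
    (hslexMem : ∀ i, 1 ≤ i → i ≤ n' → slex i ∈ Sync)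
    (hslexSurj : ∀ x ∈ Sync, ∃ i, 1 ≤ i ∧ i ≤ n' ∧ slex i = x)
    (hslexSorted : StrictMonoOn (fun i => suf T (slex i)) (Set.Icc 1 n'))
    (hX2 : 2 * τ ≤ X.length) (hX3 : X.length ≤ 3 * τ)
    (hXsync : ∀ a, 1 ≤ a → X <+: suf T a → a + (X.length - 2 * τ) ∈ Sync)
    (hj : 1 ≤ j) (hXj : X <+: suf T j)
    (hy : y ∈ Set.Icc 1 n') (hslexy : slex y = j + (X.length - 2 * τ)) :
    {j' | 1 ≤ j' ∧ j' ≤ T.length ∧ X <+: suf T j' ∧ suf T j' ≤ suf T j}.ncard =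
      {i | 1 ≤ i ∧ i ≤ y ∧ X.reverse <+: Wstr T τ slex i}.ncard := by
  set δ := X.length - 2 * τ
  have hXne : X ≠ [] := List.ne_nil_of_length_pos (by omega)
  have hXjn := add_length_le_of_isPrefix_suf hj hXne hXj
  have hX0 : ∀ k < δ, X.getD k 0 ≠ 0 := fun k hk => by
    rw [← (isPrefix_suf_iff_forall_idx hj hXjn).1 hXj k (by omega)]
    exact huniq _ (by omega) (by omega)
  have hW : ∀ i ∈ Set.Icc 1 n',
      (X.reverse <+: Wstr T τ slex i ↔ δ < slex i ∧ X <+: suf T (slex i - δ)) := fun i hi =>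
    have hs := hSyncRange _ (hslexMem i hi.1 hi.2)
    reverse_isPrefix_Wstr_iff hlast hX0 hX2 hX3 hs.1 hs.2
  have hcmp : ∀ a, 1 ≤ a → X <+: suf T a →
      (suf T a ≤ suf T j ↔ suf T (a + δ) ≤ suf T (j + δ)) := fun a ha hXa =>
    suf_le_suf_iff_of_isPrefix ha hj hXa hXj (by omega)
  have hinj : Set.InjOn (fun i => slex i - δ)
      {i | 1 ≤ i ∧ i ≤ y ∧ X.reverse <+: Wstr T τ slex i} := by
    rintro i ⟨hi1, hiy, hiW⟩ i' ⟨hi1', hiy', hiW'⟩ hii'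
    have hi : i ∈ Set.Icc 1 n' := ⟨hi1, hiy.trans hy.2⟩
    have hi' : i' ∈ Set.Icc 1 n' := ⟨hi1', hiy'.trans hy.2⟩
    have := ((hW i hi).1 hiW).1
    have := ((hW i' hi').1 hiW').1
    exact hslexSorted.injOn hi hi' (congrArg (suf T) (by simp only at hii'; omega))
  rw [← hinj.ncard_image]
  congr 1
  ext a
  simp only [Set.mem_ofPred_eq, Set.mem_image]
  constructor
  · rintro ⟨ha1, -, hXa, hle⟩
    obtain ⟨i, hi1, hin, hia⟩ := hslexSurj _ (hXsync a ha1 hXa)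
    have hi : i ∈ Set.Icc 1 n' := ⟨hi1, hin⟩
    refine ⟨i, ⟨hi1, ?_, (hW i hi).2 ⟨by omega, by rwa [hia, Nat.add_sub_cancel]⟩⟩, by omega⟩
    rw [← hslexSorted.le_iff_le hi hy]
    simpa only [hia, hslexy] using (hcmp a ha1 hXa).1 hle
  · rintro ⟨i, ⟨hi1, hiy, hiW⟩, rfl⟩
    have hi : i ∈ Set.Icc 1 n' := ⟨hi1, hiy.trans hy.2⟩
    obtain ⟨hδi, hXa⟩ := (hW i hi).1 hiW
    have := add_length_le_of_isPrefix_suf (by omega) hXne hXa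
    refine ⟨by omega, by omega, hXa, (hcmp _ (by omega) hXa).2 ?_⟩
    rw [Nat.sub_add_cancel hδi.le, ← hslexy]
    exact (hslexSorted.le_iff_le hi hy).2 hiy


theorem statement_7_general
    (n τ : ℕ) (T : List ℕ)
    (hτ : 1 ≤ τ)
    (hlen : T.length = n)
    (hlast : idx T n = 0) (huniq : ∀ i, 1 ≤ i → i < n → idx T i ≠ 0)
    (Sync : Set ℕ)
    (hSyncRange : ∀ i ∈ Sync, 1 ≤ i ∧ i + 2 * τ ≤ n + 1)
    (hCons : ∀ i j : ℕ, 1 ≤ i → i + 2 * τ ≤ n + 1 → 1 ≤ j → j + 2 * τ ≤ n + 1 →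
      sub T i (i + 2 * τ) = sub T j (j + 2 * τ) → (i ∈ Sync ↔ j ∈ Sync))
    (hDens : ∀ i : ℕ, 1 ≤ i → i + 3 * τ ≤ n + 2 →
      (Sync ∩ Set.Ico i (i + τ) = ∅ ↔ i ∈ R T τ))
    (n' : ℕ)
    (slex : ℕ → ℕ)
    (hslexMem : ∀ i, 1 ≤ i → i ≤ n' → slex i ∈ Sync)
    (hslexSurj : ∀ x ∈ Sync, ∃ i, 1 ≤ i ∧ i ≤ n' ∧ slex i = x)
    (hslexSorted : ∀ i i', 1 ≤ i → i < i' → i' ≤ n' → suf T (slex i) < suf T (slex i'))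
    (j : ℕ) (hj1 : 1 ≤ j)
    (X : List ℕ) (hX : X ∈ Dset T τ Sync) (hXpref : X <+: suf T j)
    (δj : ℕ)
    (hδj : δj = Set.ncard {j' | 1 ≤ j' ∧ j' ≤ n ∧ X.length ≤ LCE T j j' ∧
      suf T j' ≤ suf T j}) :
    ISA T j = RangeBeg X T + δj ∧
    (∀ y, 1 ≤ y → y ≤ n' → slex y = j + (X.length - 2 * τ) →
      δj = Set.ncard {i | 1 ≤ i ∧ i ≤ y ∧ X.reverse <+: Wstr T τ slex i}) := by
  subst hlen
  have hδ : δj = {j' | 1 ≤ j' ∧ j' ≤ T.length ∧ X <+: suf T j' ∧ suf T j' ≤ suf T j}.ncard := by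
    simp only [hδj, LCE, le_lcp_iff_isPrefix hXpref]
  obtain ⟨hX2, hX3, hXsync⟩ := sync_of_mem_Dset hSyncRange hCons hDens hX
  have hsorted : StrictMonoOn (fun i => suf T (slex i)) (Set.Icc 1 n') :=
    fun i hi i' hi' hii' => hslexSorted i i' hi.1 hii' hi'.2
  refine ⟨hδ ▸ ISA_eq_RangeBeg_add_ncard hXpref, fun y hy1 hy2 hslexy => hδ ▸ ?_⟩
  exact ncard_isPrefix_le_eq_ncard_reverse_isPrefix_Wstr hτ hlast huniq hSyncRange hslexMem
    hslexSurj hsorted hX2 hX3.le hXsync hj1 hXpref ⟨hy1, hy2⟩ hslexy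

/-- Lemma: ISA query for a nonperiodic position. -/
theorem statement_7
    (σ n τ : ℕ) (T : List ℕ)
    (hσ : 2 ≤ σ) (hn : 2 ≤ n) (hτ : 1 ≤ τ)
    (hlen : T.length = n) (halph : ∀ c ∈ T, c < σ)
    (hlast : idx T n = 0) (huniq : ∀ i, 1 ≤ i → i < n → idx T i ≠ 0)
    (Sync : Set ℕ)
    (hSyncRange : ∀ i ∈ Sync, 1 ≤ i ∧ i + 2 * τ ≤ n + 1)
    (hCons : ∀ i j : ℕ, 1 ≤ i → i + 2 * τ ≤ n + 1 → 1 ≤ j → j + 2 * τ ≤ n + 1 →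
      sub T i (i + 2 * τ) = sub T j (j + 2 * τ) → (i ∈ Sync ↔ j ∈ Sync))
    (hDens : ∀ i : ℕ, 1 ≤ i → i + 3 * τ ≤ n + 2 →
      (Sync ∩ Set.Ico i (i + τ) = ∅ ↔ i ∈ R T τ))
    (n' : ℕ) (hn' : Sync.ncard = n')
    (slex : ℕ → ℕ)
    (hslexMem : ∀ i, 1 ≤ i → i ≤ n' → slex i ∈ Sync)
    (hslexSurj : ∀ x ∈ Sync, ∃ i, 1 ≤ i ∧ i ≤ n' ∧ slex i = x)
    (hslexSorted : ∀ i i', 1 ≤ i → i < i' → i' ≤ n' → suf T (slex i) < suf T (slex i'))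
    (j : ℕ) (hj1 : 1 ≤ j) (hj2 : j + 3 * τ ≤ n + 2) (hjR : j ∉ R T τ)
    (X : List ℕ) (hX : X ∈ Dset T τ Sync) (hXpref : X <+: suf T j)
    (δj : ℕ)
    (hδj : δj = Set.ncard {j' | 1 ≤ j' ∧ j' ≤ n ∧ X.length ≤ LCE T j j' ∧
      suf T j' ≤ suf T j}) :
    ISA T j = RangeBeg X T + δj ∧
    (∀ y, 1 ≤ y → y ≤ n' → slex y = j + (X.length - 2 * τ) →
      δj = Set.ncard {i | 1 ≤ i ∧ i ≤ y ∧ X.reverse <+: Wstr T τ slex i}) :=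
  statement_7_general n τ T hτ hlen hlast huniq Sync hSyncRange hCons hDens n' slex hslexMem
    hslexSurj hslexSorted j hj1 X hX hXpref δj hδj
end CSA
end
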